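/- Let p ∈ (0,1) and let ρ ∈ (-2, -4/3) satisfy p = sin(π(ρ+2)/2) / ( sin(π(ρ+2)/2) + sin(π(8/3-4-ρ)/2) ) (the case κ = 8/3 of the interface formula). Then ρ + 2 = (2/π)·arctan( p√3 / (2−p) ), and moreover 1 − d(8/3, ρ) = (1/6)·( 2 − (3/π)·arctan( p√3/(2−p) ) )·( 1 − (3/π)·arctan( p√3/(2−p) ) ), where d(κ,ρ) := 1 − (κ−2−(ρ+2))·(κ/2−(ρ+2))/κ. -/

import Mathlib

/-- The case `κ = 8/3` (percolation, `κ' = 6`) of the interface formula: if `p ∈ (0,1)`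
and `ρ ∈ (-2, -4/3)` satisfy `p = sin(π(ρ+2)/2)/(sin(π(ρ+2)/2) + sin(π(8/3-4-ρ)/2))`,
then `ρ + 2 = (2/π)·arctan(p√3/(2−p))` and the half-plane one-arm exponent
`1 − d(8/3,ρ)` equals `(1/6)(2 − (3/π)arctan(p√3/(2−p)))(1 − (3/π)arctan(p√3/(2−p)))`,
where `d(κ,ρ) = 1 − (κ−2−(ρ+2))(κ/2−(ρ+2))/κ`. -/
theorem percolation_divide_and_color_exponent (p ρ : ℝ)
    (hp : p ∈ Set.Ioo (0 : ℝ) 1) (hρ : ρ ∈ Set.Ioo (-2 : ℝ) (-4 / 3))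
    (hformula : p = Real.sin (Real.pi * (ρ + 2) / 2) /
        (Real.sin (Real.pi * (ρ + 2) / 2) + Real.sin (Real.pi * (8 / 3 - 4 - ρ) / 2))) :
    ρ + 2 = (2 / Real.pi) * Real.arctan (p * Real.sqrt 3 / (2 - p)) ∧
    1 - (1 - (8 / 3 - 2 - (ρ + 2)) * (8 / 3 / 2 - (ρ + 2)) / (8 / 3)) =
      (1 / 6) * (2 - (3 / Real.pi) * Real.arctan (p * Real.sqrt 3 / (2 - p))) *
        (1 - (3 / Real.pi) * Real.arctan (p * Real.sqrt 3 / (2 - p))) := by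
  obtain ⟨hp0, hp1⟩ := hp
  obtain ⟨hρ1, hρ2⟩ := hρ
  have hπ := Real.pi_pos
  set θ := Real.pi * (ρ + 2) / 2 with hθdef
  clear_value θ
  have hθ0 : 0 < θ := by rw [hθdef]; exact div_pos (mul_pos hπ (by linarith)) two_pos
  have hθlt : θ < Real.pi / 3 := by
    rw [hθdef]
    nlinarith [mul_pos hπ (show (0:ℝ) < 2/3 - (ρ + 2) by linarith)]
  have hs : 0 < Real.sin θ := Real.sin_pos_of_pos_of_lt_pi hθ0 (by linarith)
  have hc : 0 < Real.cos θ := Real.cos_pos_of_mem_Ioo ⟨by linarith, by linarith⟩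
  have h3 : 0 < Real.sqrt 3 := Real.sqrt_pos.mpr (by norm_num)
  have hsin2 : Real.sin (Real.pi * (8 / 3 - 4 - ρ) / 2) =
      Real.sqrt 3 / 2 * Real.cos θ - 1 / 2 * Real.sin θ := by
    have harg : Real.pi * (8 / 3 - 4 - ρ) / 2 = Real.pi / 3 - θ := by
      rw [hθdef]; ring
    rw [harg, Real.sin_sub, Real.sin_pi_div_three, Real.cos_pi_div_three]
  have hden : 0 < Real.sin θ + (Real.sqrt 3 / 2 * Real.cos θ - 1 / 2 * Real.sin θ) := by
    nlinarith
  rw [hsin2] at hformula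
  have hD : Real.sin θ + Real.sqrt 3 * Real.cos θ ≠ 0 :=
    ne_of_gt (by nlinarith [mul_pos h3 hc])
  have h2pne : 2 - p ≠ 0 := ne_of_gt (by linarith)
  have h2p : 2 - p = Real.sqrt 3 * Real.cos θ /
      (Real.sin θ + (Real.sqrt 3 / 2 * Real.cos θ - 1 / 2 * Real.sin θ)) := by
    rw [hformula]; field_simp [hD]
    linear_combination (-1 : ℝ) * mul_inv_cancel₀ hD
  have harg2 : p * Real.sqrt 3 / (2 - p) = Real.tan θ := by
    rw [Real.tan_eq_sin_div_cos, div_eq_div_iff h2pne (ne_of_gt hc)]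
    rw [h2p, hformula]
    ring
  have hatan : Real.arctan (p * Real.sqrt 3 / (2 - p)) = θ := by
    rw [harg2]
    exact Real.arctan_tan (by linarith) (by linarith)
  constructor
  · rw [hatan, hθdef]
    field_simp
  · rw [hatan, hθdef]
    field_simp
    ring
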